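/- Fix w ≥ 0 and λ ∈ [0,1], with λ ∉ {0,1} if w = 0, and let W := [[0,w],[w,0]]. Let (β₁,β₂) be distributed according to ν_2^{W,0} and define γ := (4β₁β₂ − w²)/(2wλ(1−λ) + 2β₂λ² + 2β₁(1−λ)²) and Z := (2β₁ − λ²γ)/(w + λ(1−λ)γ). Then the joint law of (γ,Z), i.e. the pushforward of ν_2^{W,0} under (β₁,β₂) ↦ (γ,Z), is the measure on (0,∞)² with density (c,z) ↦ (2/π) · (√(w + λ(1−λ)c)/(4√c)) · (1/z) · ((1−λ)√z + λ/√z) · exp(−c/2 − (w + λ(1−λ)c)·(z−1)²/(2z)). -/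

import Mathlib

open scoped Classical ENNReal

open MeasureTheory Matrix

noncomputable instance matrixMeasurableSpace {m n : Type*} :
    MeasurableSpace (Matrix m n ℝ) :=
  (inferInstance : MeasurableSpace (m → n → ℝ))

noncomputable def Hmat {n : ℕ} (W : Matrix (Fin n) (Fin n) ℝ) (β : Fin n → ℝ) :
    Matrix (Fin n) (Fin n) ℝ :=
  fun i j => if i = j then 2 * β i - W i i else - W i j

noncomputable def nuDensity {n : ℕ} (W : Matrix (Fin n) (Fin n) ℝ) (η : Fin n → ℝ)
    (β : Fin n → ℝ) : ℝ :=
  if (Hmat W β).PosDef then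
    (2 / Real.pi) ^ ((n : ℝ) / 2) *
      Real.exp (-(1/2) * ((∑ i, ∑ j, Hmat W β i j)
        + (η ⬝ᵥ ((Hmat W β)⁻¹ *ᵥ η)) - 2 * ∑ i, η i)) *
      (Real.sqrt (Hmat W β).det)⁻¹
  else 0

/-- The measure ν_n^{W,η} on ℝ^n. -/
noncomputable def nuMeasure {n : ℕ} (W : Matrix (Fin n) (Fin n) ℝ) (η : Fin n → ℝ) :
    Measure (Fin n → ℝ) :=
  volume.withDensity (fun β => ENNReal.ofReal (nuDensity W η β))

/-- The measure ν̃_n^{W,η}: pushforward of ν_n^{W,η} under β ↦ H_β. -/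
noncomputable def nuTilde {n : ℕ} (W : Matrix (Fin n) (Fin n) ℝ) (η : Fin n → ℝ) :
    Measure (Matrix (Fin n) (Fin n) ℝ) :=
  (nuMeasure W η).map (Hmat W)

/-- Indices i and j are H-connected. -/
def HConnected {n : ℕ} (H : Matrix (Fin n) (Fin n) ℝ) (i j : Fin n) : Prop :=
  Relation.ReflTransGen (fun a b => H a b ≠ 0) i j

/-! ### Auxiliary lemmas -/

lemma Hmat_eq (w : ℝ) (β : Fin 2 → ℝ) :
    Hmat !![0, w; w, 0] β = !![2 * β 0, -w; -w, 2 * β 1] := by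
  ext i j
  fin_cases i <;> fin_cases j <;> simp [Hmat]

lemma det_Hmat (w : ℝ) (β : Fin 2 → ℝ) :
    (Hmat !![0, w; w, 0] β).det = 4 * β 0 * β 1 - w ^ 2 := by
  rw [Hmat_eq, det_fin_two_of]; ring

lemma sum_Hmat (w : ℝ) (β : Fin 2 → ℝ) :
    ∑ i, ∑ j, Hmat !![0, w; w, 0] β i j = 2 * β 0 + 2 * β 1 - 2 * w := by
  rw [Hmat_eq]
  simp [Fin.sum_univ_two]
  ring

lemma posdef_iff (w : ℝ) (hw : 0 ≤ w) (β : Fin 2 → ℝ) :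
    (Hmat !![0, w; w, 0] β).PosDef ↔
      0 < β 0 ∧ 0 < β 1 ∧ w ^ 2 < 4 * β 0 * β 1 := by
  rw [Hmat_eq]
  constructor
  · intro h
    have hdet := h.det_pos
    rw [det_fin_two_of] at hdet
    have h0 := h.dotProduct_mulVec_pos (x := ![1, 0]) (by simp [Function.ne_iff])
    have h1 := h.dotProduct_mulVec_pos (x := ![0, 1]) (by simp [Function.ne_iff])
    simp [dotProduct, Matrix.mulVec, Fin.sum_univ_two] at h0 h1
    refine ⟨by linarith, by linarith, by nlinarith⟩
  · rintro ⟨h0, h1, hd⟩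
    refine Matrix.PosDef.of_dotProduct_mulVec_pos ?_ ?_
    · ext i j
      fin_cases i <;> fin_cases j <;> simp
    · intro x hx
      have hx' : x 0 ≠ 0 ∨ x 1 ≠ 0 := by
        by_contra hc
        push_neg at hc
        apply hx
        ext i; fin_cases i <;> simp [hc.1, hc.2]
      simp only [star_trivial]
      have hquad : x ⬝ᵥ (!![2 * β 0, -w; -w, 2 * β 1] *ᵥ x) =
          2 * β 0 * (x 0)^2 - 2 * w * (x 0) * (x 1) + 2 * β 1 * (x 1)^2 := by
        simp [dotProduct, Matrix.mulVec, Fin.sum_univ_two]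
        ring
      rw [hquad]
      rcases eq_or_ne (x 1) 0 with h1' | h1'
      · have h0' : x 0 ≠ 0 := by
          rcases hx' with h | h
          · exact h
          · exact absurd h1' h
        have : 0 < (x 0) ^ 2 := by positivity
        rw [h1']
        nlinarith
      · have hx1 : 0 < (x 1) ^ 2 := by positivity
        have key : 0 < (2 * β 0 * x 0 - w * x 1) ^ 2 +
            (4 * β 0 * β 1 - w ^ 2) * (x 1) ^ 2 :=
          add_pos_of_nonneg_of_pos (sq_nonneg _) (mul_pos (by linarith) hx1)
        nlinarith

lemma nuDensity_eq (w : ℝ) (hw : 0 ≤ w) (β : Fin 2 → ℝ) :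
    nuDensity !![0, w; w, 0] 0 β =
      if 0 < β 0 ∧ 0 < β 1 ∧ w ^ 2 < 4 * β 0 * β 1 then
        (2 / Real.pi) * Real.exp (-(β 0 + β 1 - w)) *
          (Real.sqrt (4 * β 0 * β 1 - w ^ 2))⁻¹
      else 0 := by
  by_cases h : (Hmat !![0, w; w, 0] β).PosDef
  · rw [nuDensity, if_pos h, if_pos ((posdef_iff w hw β).1 h), det_Hmat, sum_Hmat]
    have h2 : (2 / Real.pi) ^ (((2 : ℕ) : ℝ) / 2) = 2 / Real.pi := by
      norm_num
    rw [h2, zero_dotProduct]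
    have h3 : ∑ i, (0 : Fin 2 → ℝ) i = 0 := by simp
    rw [h3]
    have h4 : -(1/2 : ℝ) * (2 * β 0 + 2 * β 1 - 2 * w + 0 - 2 * 0) =
        -(β 0 + β 1 - w) := by ring
    rw [h4]
  · rw [nuDensity, if_neg h, if_neg fun hc => h ((posdef_iff w hw β).2 hc)]

/-! ### The inverse map and its Jacobian -/

noncomputable def phi (w lam : ℝ) (c : Fin 2 → ℝ) : Fin 2 → ℝ :=
  ![((w + lam * (1 - lam) * c 0) * c 1 + lam ^ 2 * c 0) / 2,
    ((w + lam * (1 - lam) * c 0) / c 1 + (1 - lam) ^ 2 * c 0) / 2]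

noncomputable def jmat (w lam : ℝ) (c : Fin 2 → ℝ) : Matrix (Fin 2) (Fin 2) ℝ :=
  !![(lam * (1 - lam) * c 1 + lam ^ 2) / 2, (w + lam * (1 - lam) * c 0) / 2;
     (lam * (1 - lam) / c 1 + (1 - lam) ^ 2) / 2,
       -((w + lam * (1 - lam) * c 0) / (2 * (c 1) ^ 2))]

noncomputable def jclm (w lam : ℝ) (c : Fin 2 → ℝ) : (Fin 2 → ℝ) →L[ℝ] (Fin 2 → ℝ) :=
  LinearMap.toContinuousLinearMap ((jmat w lam c).mulVecLin)

lemma jclm_det (w lam : ℝ) (c : Fin 2 → ℝ) :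
    (jclm w lam c).det = (jmat w lam c).det := by
  rw [ContinuousLinearMap.det, jclm, LinearMap.coe_toContinuousLinearMap,
    ← Matrix.toLin'_apply', LinearMap.det_toLin']

lemma hasFDerivAt_phi (w lam : ℝ) (c : Fin 2 → ℝ) (hc : c 1 ≠ 0) :
    HasFDerivAt (phi w lam) (jclm w lam c) c := by
  have h0 : HasFDerivAt (fun c : Fin 2 → ℝ => c 0)
      (ContinuousLinearMap.proj (R := ℝ) (φ := fun _ : Fin 2 => ℝ) 0) c :=
    hasFDerivAt_apply 0 c
  have h1 : HasFDerivAt (fun c : Fin 2 → ℝ => c 1)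
      (ContinuousLinearMap.proj (R := ℝ) (φ := fun _ : Fin 2 => ℝ) 1) c :=
    hasFDerivAt_apply 1 c
  have h_inv : HasFDerivAt (fun c : Fin 2 → ℝ => (c 1)⁻¹)
      ((-(c 1 ^ 2)⁻¹) • ContinuousLinearMap.proj (R := ℝ) (φ := fun _ : Fin 2 => ℝ) 1) c :=
    (hasDerivAt_inv hc).comp_hasFDerivAt c h1
  apply hasFDerivAt_pi''
  intro i
  fin_cases i
  · have hfun : (fun c : Fin 2 → ℝ => phi w lam c 0) =
        fun c : Fin 2 → ℝ =>
          (1/2) * ((w + lam * (1 - lam) * c 0) * c 1 + lam ^ 2 * c 0) := by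
      funext c; simp [phi]; ring
    show HasFDerivAt (fun c : Fin 2 → ℝ => phi w lam c 0) _ c
    rw [hfun]
    have hD := ((((h0.const_mul (lam * (1 - lam))).const_add w).mul h1).add
      (h0.const_mul (lam ^ 2))).const_mul (1/2 : ℝ)
    refine hD.congr_fderiv ?_
    ext x
    simp [jclm, jmat, Matrix.mulVec, dotProduct, Fin.sum_univ_two]
    ring
  · have hfun : (fun c : Fin 2 → ℝ => phi w lam c 1) =
        fun c : Fin 2 → ℝ =>
          (1/2) * ((w + lam * (1 - lam) * c 0) * (c 1)⁻¹ + (1 - lam) ^ 2 * c 0) := by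
      funext c; simp [phi]; ring
    show HasFDerivAt (fun c : Fin 2 → ℝ => phi w lam c 1) _ c
    rw [hfun]
    have hD := ((((h0.const_mul (lam * (1 - lam))).const_add w).mul h_inv).add
      (h0.const_mul ((1 - lam) ^ 2))).const_mul (1/2 : ℝ)
    refine hD.congr_fderiv ?_
    ext x
    simp [jclm, jmat, Matrix.mulVec, dotProduct, Fin.sum_univ_two]
    field_simp
    ring
lemma apos {w lam : ℝ} (hw : 0 ≤ w) (hl0 : 0 ≤ lam) (hl1 : lam ≤ 1)
    (hw0 : w = 0 → lam ≠ 0 ∧ lam ≠ 1) (t : ℝ) (ht : 0 < t) :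
    0 < w + lam * (1 - lam) * t := by
  rcases eq_or_lt_of_le hw with h | h
  · obtain ⟨h1, h2⟩ := hw0 h.symm
    have hx : 0 < lam := lt_of_le_of_ne hl0 (Ne.symm h1)
    have hy : 0 < 1 - lam := by
      have := lt_of_le_of_ne hl1 h2
      linarith
    nlinarith [mul_pos (mul_pos hx hy) ht]
  · nlinarith [mul_nonneg (mul_nonneg hl0 (by linarith : (0:ℝ) ≤ 1 - lam)) ht.le]

lemma Dpos {w lam : ℝ} (hw : 0 ≤ w) (hl0 : 0 ≤ lam) (hl1 : lam ≤ 1)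
    (b0 b1 : ℝ) (h0 : 0 < b0) (h1 : 0 < b1) :
    0 < 2 * w * lam * (1 - lam) + 2 * b1 * lam ^ 2 + 2 * b0 * (1 - lam) ^ 2 := by
  have hml : 0 ≤ 1 - lam := by linarith
  have hm : 0 ≤ 2 * w * lam * (1 - lam) := by positivity
  rcases eq_or_ne lam 0 with h | h
  · subst h; nlinarith
  · have : 0 < 2 * b1 * lam ^ 2 := by
      have : 0 < lam ^ 2 := by positivity
      nlinarith
    nlinarith [mul_nonneg (mul_nonneg (by norm_num : (0:ℝ) ≤ 2) h0.le)
      (sq_nonneg (1 - lam))]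

lemma Kpos {lam : ℝ} (hl0 : 0 ≤ lam) (hl1 : lam ≤ 1) (z : ℝ) (hz : 0 < z) :
    0 < 2 * lam * (1 - lam) + lam ^ 2 / z + (1 - lam) ^ 2 * z := by
  have hml : 0 ≤ 1 - lam := by linarith
  have hm : 0 ≤ 2 * lam * (1 - lam) := by positivity
  rcases eq_or_ne lam 0 with h | h
  · subst h; norm_num; positivity
  · have h2 : 0 < lam ^ 2 / z := by positivity
    nlinarith [mul_nonneg (sq_nonneg (1 - lam)) hz.le]

lemma Spos {lam : ℝ} (hl0 : 0 ≤ lam) (hl1 : lam ≤ 1) (z : ℝ) (hz : 0 < z) :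
    0 < (1 - lam) * Real.sqrt z + lam / Real.sqrt z := by
  have hs : 0 < Real.sqrt z := Real.sqrt_pos.2 hz
  rcases eq_or_ne lam 1 with h | h
  · subst h; simp; positivity
  · have hl : 0 < 1 - lam := by
      have := lt_of_le_of_ne hl1 h
      linarith
    have hA : 0 < (1 - lam) * Real.sqrt z := by positivity
    have hB : 0 ≤ lam / Real.sqrt z := by positivity
    linarith

lemma phi_mem {w lam : ℝ} (hw : 0 ≤ w) (hl0 : 0 ≤ lam) (hl1 : lam ≤ 1)
    (hw0 : w = 0 → lam ≠ 0 ∧ lam ≠ 1) (c : Fin 2 → ℝ) (h0 : 0 < c 0) (h1 : 0 < c 1) :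
    0 < phi w lam c 0 ∧ 0 < phi w lam c 1 ∧
      w ^ 2 < 4 * phi w lam c 0 * phi w lam c 1 := by
  have ha : 0 < w + lam * (1 - lam) * c 0 := apos hw hl0 hl1 hw0 _ h0
  have hp0 : phi w lam c 0 =
      ((w + lam * (1 - lam) * c 0) * c 1 + lam ^ 2 * c 0) / 2 := by simp [phi]
  have hp1 : phi w lam c 1 =
      ((w + lam * (1 - lam) * c 0) / c 1 + (1 - lam) ^ 2 * c 0) / 2 := by simp [phi]
  have hkey : 4 * phi w lam c 0 * phi w lam c 1 - w ^ 2 =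
      (w + lam * (1 - lam) * c 0) * c 0 *
        (2 * lam * (1 - lam) + lam ^ 2 / c 1 + (1 - lam) ^ 2 * c 1) := by
    rw [hp0, hp1]
    field_simp
    ring
  have hK := Kpos hl0 hl1 (c 1) h1
  refine ⟨?_, ?_, by nlinarith [mul_pos (mul_pos ha h0) hK]⟩
  · rw [hp0]
    have hx : 0 ≤ lam ^ 2 * c 0 := by positivity
    have hy : 0 < (w + lam * (1 - lam) * c 0) * c 1 := by positivity
    linarith
  · rw [hp1]
    have hx : 0 ≤ (1 - lam) ^ 2 * c 0 := by positivity
    have hy : 0 < (w + lam * (1 - lam) * c 0) / c 1 := by positivity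
    linarith

lemma gam_phi {w lam : ℝ} (hw : 0 ≤ w) (hl0 : 0 ≤ lam) (hl1 : lam ≤ 1)
    (hw0 : w = 0 → lam ≠ 0 ∧ lam ≠ 1) (c : Fin 2 → ℝ) (h0 : 0 < c 0) (h1 : 0 < c 1) :
    (4 * phi w lam c 0 * phi w lam c 1 - w ^ 2) /
      (2 * w * lam * (1 - lam) + 2 * phi w lam c 1 * lam ^ 2 +
        2 * phi w lam c 0 * (1 - lam) ^ 2) = c 0 := by
  have hmem := phi_mem hw hl0 hl1 hw0 c h0 h1
  have hD := Dpos hw hl0 hl1 _ _ hmem.1 hmem.2.1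
  rw [div_eq_iff hD.ne']
  simp only [phi]
  simp only [Matrix.cons_val_zero, Matrix.cons_val_one, Matrix.head_cons]
  field_simp
  ring

lemma Z_phi {w lam : ℝ} (hw : 0 ≤ w) (hl0 : 0 ≤ lam) (hl1 : lam ≤ 1)
    (hw0 : w = 0 → lam ≠ 0 ∧ lam ≠ 1) (c : Fin 2 → ℝ) (h0 : 0 < c 0) (h1 : 0 < c 1) :
    (2 * phi w lam c 0 - lam ^ 2 * c 0) / (w + lam * (1 - lam) * c 0) = c 1 := by
  have ha : 0 < w + lam * (1 - lam) * c 0 := apos hw hl0 hl1 hw0 _ h0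
  rw [div_eq_iff ha.ne']
  simp only [phi, Matrix.cons_val_zero]
  ring

lemma exists_preimage {w lam : ℝ} (hw : 0 ≤ w) (hl0 : 0 ≤ lam) (hl1 : lam ≤ 1)
    (hw0 : w = 0 → lam ≠ 0 ∧ lam ≠ 1) (β : Fin 2 → ℝ)
    (hb0 : 0 < β 0) (hb1 : 0 < β 1) (hbd : w ^ 2 < 4 * β 0 * β 1) :
    ∃ c : Fin 2 → ℝ, (0 < c 0 ∧ 0 < c 1) ∧ phi w lam c = β ∧
      c 0 = (4 * β 0 * β 1 - w ^ 2) /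
        (2 * w * lam * (1 - lam) + 2 * β 1 * lam ^ 2 + 2 * β 0 * (1 - lam) ^ 2) ∧
      c 1 = (2 * β 0 - lam ^ 2 * c 0) / (w + lam * (1 - lam) * c 0) := by
  have hD := Dpos hw hl0 hl1 _ _ hb0 hb1
  set D := 2 * w * lam * (1 - lam) + 2 * β 1 * lam ^ 2 + 2 * β 0 * (1 - lam) ^ 2 with hDdef
  set g := (4 * β 0 * β 1 - w ^ 2) / D with hgdef
  have hg : 0 < g := div_pos (by linarith) hD
  have ha : 0 < w + lam * (1 - lam) * g := apos hw hl0 hl1 hw0 _ hg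
  have hval : 0 < 2 * (1 - lam) * β 0 + lam * w := by
    rcases eq_or_ne lam 1 with h | h
    · subst h
      have hwne : w ≠ 0 := fun hc => (hw0 hc).2 rfl
      have : 0 < w := lt_of_le_of_ne hw (Ne.symm hwne)
      nlinarith
    · have hl : 0 < 1 - lam := by
        have := lt_of_le_of_ne hl1 h
        linarith
      nlinarith [mul_nonneg hl0 hw]
  have hnum2 : 2 * β 0 - lam ^ 2 * g = (2 * (1 - lam) * β 0 + lam * w) ^ 2 / D := by
    rw [hgdef]
    field_simp
    rw [hDdef]
    ring
  have hnum : 0 < 2 * β 0 - lam ^ 2 * g := by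
    rw [hnum2]
    positivity
  set z := (2 * β 0 - lam ^ 2 * g) / (w + lam * (1 - lam) * g) with hzdef
  have hz : 0 < z := div_pos hnum ha
  refine ⟨![g, z], ⟨by simpa using hg, by simpa using hz⟩, ?_, by simp, by simp [hzdef]⟩
  have hprod : (2 * β 0 - lam ^ 2 * g) * (2 * β 1 - (1 - lam) ^ 2 * g) =
      (w + lam * (1 - lam) * g) ^ 2 := by
    rw [hgdef]
    field_simp
    rw [hDdef]
    ring
  have hfac : 0 < 2 * β 1 - (1 - lam) ^ 2 * g := by
    nlinarith [sq_nonneg (w + lam * (1 - lam) * g)]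
  funext i
  fin_cases i
  · show phi w lam ![g, z] 0 = β 0
    simp only [phi, Matrix.cons_val_zero, Matrix.cons_val_one, Matrix.head_cons]
    rw [hzdef]
    field_simp
    ring
  · show phi w lam ![g, z] 1 = β 1
    simp only [phi, Matrix.cons_val_zero, Matrix.cons_val_one, Matrix.head_cons]
    have hzval : z = (w + lam * (1 - lam) * g) / (2 * β 1 - (1 - lam) ^ 2 * g) := by
      rw [hzdef, div_eq_div_iff ha.ne' hfac.ne']
      linarith [hprod]
    rw [hzval, div_div_cancel₀ ha.ne']
    ring

lemma jmat_det_eq {w lam : ℝ} (c : Fin 2 → ℝ) (h1 : c 1 ≠ 0) :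
    (jmat w lam c).det =
      -((w + lam * (1 - lam) * c 0) * (lam + (1 - lam) * c 1) ^ 2 / (4 * (c 1) ^ 2)) := by
  simp only [jmat, det_fin_two_of]
  field_simp
  ring

lemma density_identity {w lam : ℝ} (hw : 0 ≤ w) (hl0 : 0 ≤ lam) (hl1 : lam ≤ 1)
    (hw0 : w = 0 → lam ≠ 0 ∧ lam ≠ 1) (c : Fin 2 → ℝ) (h0 : 0 < c 0) (h1 : 0 < c 1) :
    |(jmat w lam c).det| * nuDensity !![0, w; w, 0] 0 (phi w lam c) =
      (2 / Real.pi) *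
        (Real.sqrt (w + lam * (1 - lam) * c 0) / (4 * Real.sqrt (c 0))) * (1 / c 1) *
        ((1 - lam) * Real.sqrt (c 1) + lam / Real.sqrt (c 1)) *
        Real.exp (-(c 0 / 2) -
          (w + lam * (1 - lam) * c 0) * (c 1 - 1) ^ 2 / (2 * c 1)) := by
  have ha : 0 < w + lam * (1 - lam) * c 0 := apos hw hl0 hl1 hw0 _ h0
  have hmem := phi_mem hw hl0 hl1 hw0 c h0 h1
  rw [nuDensity_eq w hw, if_pos hmem]
  -- absolute value of the Jacobian determinant
  have habs : |(jmat w lam c).det| =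
      (w + lam * (1 - lam) * c 0) * (lam + (1 - lam) * c 1) ^ 2 / (4 * (c 1) ^ 2) := by
    rw [jmat_det_eq c h1.ne', abs_neg, abs_of_nonneg (by positivity)]
  rw [habs]
  -- the exponent
  have hexp : -(phi w lam c 0 + phi w lam c 1 - w) =
      -(c 0 / 2) - (w + lam * (1 - lam) * c 0) * (c 1 - 1) ^ 2 / (2 * c 1) := by
    simp only [phi, Matrix.cons_val_zero, Matrix.cons_val_one, Matrix.head_cons]
    field_simp
    ring
  rw [hexp]
  -- square roots
  have hs1 : 0 < Real.sqrt (c 1) := Real.sqrt_pos.2 h1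
  have hsa : 0 < Real.sqrt (w + lam * (1 - lam) * c 0) := Real.sqrt_pos.2 ha
  have hsc : 0 < Real.sqrt (c 0) := Real.sqrt_pos.2 h0
  have hs1q : Real.sqrt (c 1) ^ 2 = c 1 := Real.sq_sqrt h1.le
  have hsaq : Real.sqrt (w + lam * (1 - lam) * c 0) ^ 2 = w + lam * (1 - lam) * c 0 :=
    Real.sq_sqrt ha.le
  have hscq : Real.sqrt (c 0) ^ 2 = c 0 := Real.sq_sqrt h0.le
  have hS : 0 < (1 - lam) * Real.sqrt (c 1) + lam / Real.sqrt (c 1) :=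
    Spos hl0 hl1 _ h1
  have hkey : 4 * phi w lam c 0 * phi w lam c 1 - w ^ 2 =
      (w + lam * (1 - lam) * c 0) * c 0 *
        (2 * lam * (1 - lam) + lam ^ 2 / c 1 + (1 - lam) ^ 2 * c 1) := by
    simp only [phi, Matrix.cons_val_zero, Matrix.cons_val_one, Matrix.head_cons]
    field_simp
    ring
  have hKS : 2 * lam * (1 - lam) + lam ^ 2 / c 1 + (1 - lam) ^ 2 * c 1 =
      ((1 - lam) * Real.sqrt (c 1) + lam / Real.sqrt (c 1)) ^ 2 := by
    have hs1' := hs1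
    have hs1q' := hs1q
    generalize hu : Real.sqrt (c 1) = u at hs1' hs1q' ⊢
    rw [← hs1q']
    field_simp
    ring
  have hsqrt : Real.sqrt (4 * phi w lam c 0 * phi w lam c 1 - w ^ 2) =
      Real.sqrt (w + lam * (1 - lam) * c 0) * Real.sqrt (c 0) *
        ((1 - lam) * Real.sqrt (c 1) + lam / Real.sqrt (c 1)) := by
    rw [hkey, hKS, Real.sqrt_mul (mul_nonneg ha.le h0.le), Real.sqrt_mul ha.le,
      Real.sqrt_sq hS.le]
  rw [hsqrt]
  generalize hu : Real.sqrt (c 1) = u at hs1 hs1q hS ⊢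
  generalize hv : Real.sqrt (w + lam * (1 - lam) * c 0) = v at hsa hsaq ⊢
  generalize hxx : Real.sqrt (c 0) = x at hsc hscq ⊢
  rw [← hs1q, ← hsaq, ← hscq]
  have hSsum : (1 - lam) * u + lam / u = ((1 - lam) * u ^ 2 + lam) / u := by
    field_simp
  have hP : 0 < (1 - lam) * u ^ 2 + lam := by
    rcases lt_or_eq_of_le hl1 with h | h
    · have h1' : 0 < (1 - lam) * u ^ 2 := by
        have : 0 < 1 - lam := by linarith
        positivity
      linarith
    · rw [h]; norm_num
  rw [hSsum]
  generalize Real.exp (-(x ^ 2 / 2) - v ^ 2 * (u ^ 2 - 1) ^ 2 / (2 * u ^ 2)) = EE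
  field_simp [hs1.ne', hsa.ne', hsc.ne', hP.ne', Real.pi_ne_zero]
  ring

lemma map_withDensity_aux {α β : Type*} [MeasurableSpace α] [MeasurableSpace β]
    (μ : Measure α) {f : α → β} (hf : Measurable f) {g : β → ℝ≥0∞} (hg : Measurable g) :
    (μ.withDensity (fun x => g (f x))).map f = (μ.map f).withDensity g := by
  ext A hA
  rw [Measure.map_apply hf hA, withDensity_apply _ hA, withDensity_apply _ (hf hA),
    setLIntegral_map hA hg hf]

lemma map_withDensity_aux2 {α β : Type*} [MeasurableSpace α] [MeasurableSpace β]
    (μ : Measure α) {f : α → β} (hf : Measurable f) {J : α → ℝ≥0∞} (hJ : Measurable J)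
    {g : β → ℝ≥0∞} (hg : Measurable g) :
    (μ.withDensity (fun x => J x * g (f x))).map f =
      ((μ.withDensity J).map f).withDensity g := by
  have h1 : (fun x => J x * g (f x)) = J * (g ∘ f) := rfl
  rw [h1, withDensity_mul μ hJ (hg.comp hf)]
  have h2 : (g ∘ f) = fun x => g (f x) := rfl
  rw [h2, map_withDensity_aux _ hf hg]

/-- joint law of (γ, Z) under ν_2^{W,0} with W = [[0,w],[w,0]]. -/
theorem stmt8 (w lam : ℝ) (hw : 0 ≤ w) (hlam : lam ∈ Set.Icc (0 : ℝ) 1)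
    (hw0 : w = 0 → lam ≠ 0 ∧ lam ≠ 1) :
    (let gam : (Fin 2 → ℝ) → ℝ := fun β =>
       (4 * β 0 * β 1 - w ^ 2) /
         (2 * w * lam * (1 - lam) + 2 * β 1 * lam ^ 2 + 2 * β 0 * (1 - lam) ^ 2)
     let Z : (Fin 2 → ℝ) → ℝ := fun β =>
       (2 * β 0 - lam ^ 2 * gam β) / (w + lam * (1 - lam) * gam β)
     (nuMeasure !![0, w; w, 0] 0).map (fun β => (gam β, Z β)) =
       MeasureTheory.volume.withDensity (fun p : ℝ × ℝ => ENNReal.ofReal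
         (if 0 < p.1 ∧ 0 < p.2 then
           (2 / Real.pi) *
             (Real.sqrt (w + lam * (1 - lam) * p.1) / (4 * Real.sqrt p.1)) *
             (1 / p.2) *
             ((1 - lam) * Real.sqrt p.2 + lam / Real.sqrt p.2) *
             Real.exp (-(p.1 / 2) -
               (w + lam * (1 - lam) * p.1) * (p.2 - 1) ^ 2 / (2 * p.2))
         else 0))) := by
  intro gam Z
  obtain ⟨hl0, hl1⟩ := hlam
  have hgam : ∀ β : Fin 2 → ℝ, gam β = (4 * β 0 * β 1 - w ^ 2) /
      (2 * w * lam * (1 - lam) + 2 * β 1 * lam ^ 2 + 2 * β 0 * (1 - lam) ^ 2) :=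
    fun _ => rfl
  have hZ : ∀ β : Fin 2 → ℝ, Z β =
      (2 * β 0 - lam ^ 2 * gam β) / (w + lam * (1 - lam) * gam β) := fun _ => rfl
  set sreg : Set (Fin 2 → ℝ) := {c | 0 < c 0 ∧ 0 < c 1} with hs_def
  set treg : Set (ℝ × ℝ) := Set.Ioi 0 ×ˢ Set.Ioi 0 with ht_def
  set Ereg : Set (Fin 2 → ℝ) := {β | 0 < β 0 ∧ 0 < β 1 ∧ w ^ 2 < 4 * β 0 * β 1}
    with hE_def
  have hsm : MeasurableSet sreg := by
    rw [hs_def, Set.setOf_and]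
    exact (measurableSet_lt measurable_const (measurable_pi_apply 0)).inter
      (measurableSet_lt measurable_const (measurable_pi_apply 1))
  have htm : MeasurableSet treg := measurableSet_Ioi.prod measurableSet_Ioi
  have hEm : MeasurableSet Ereg := by
    rw [hE_def, Set.setOf_and, Set.setOf_and]
    exact (measurableSet_lt measurable_const (measurable_pi_apply 0)).inter
      ((measurableSet_lt measurable_const (measurable_pi_apply 1)).inter
        (measurableSet_lt measurable_const
          ((measurable_const.mul (measurable_pi_apply 0)).mul (measurable_pi_apply 1))))
  have hphim : Measurable (phi w lam) := by
    apply measurable_pi_iff.2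
    intro i
    fin_cases i
    · exact (show Measurable fun c : Fin 2 → ℝ =>
        ((w + lam * (1 - lam) * c 0) * c 1 + lam ^ 2 * c 0) / 2 from
        (((measurable_const.add (measurable_const.mul (measurable_pi_apply 0))).mul
          (measurable_pi_apply 1)).add
            (measurable_const.mul (measurable_pi_apply 0))).div_const 2)
    · exact (show Measurable fun c : Fin 2 → ℝ =>
        ((w + lam * (1 - lam) * c 0) / c 1 + (1 - lam) ^ 2 * c 0) / 2 from
        (((measurable_const.add (measurable_const.mul (measurable_pi_apply 0))).div
          (measurable_pi_apply 1)).add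
            (measurable_const.mul (measurable_pi_apply 0))).div_const 2)
  have hgamm : Measurable gam := by
    have : gam = fun β : Fin 2 → ℝ => (4 * β 0 * β 1 - w ^ 2) /
        (2 * w * lam * (1 - lam) + 2 * β 1 * lam ^ 2 + 2 * β 0 * (1 - lam) ^ 2) :=
      funext hgam
    rw [this]
    exact (((measurable_const.mul (measurable_pi_apply 0)).mul
      (measurable_pi_apply 1)).sub measurable_const).div
        ((measurable_const.add ((measurable_const.mul (measurable_pi_apply 1)).mul
          measurable_const)).add ((measurable_const.mul (measurable_pi_apply 0)).mul
            measurable_const))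
  have hZm : Measurable Z := by
    have : Z = fun β : Fin 2 → ℝ =>
        (2 * β 0 - lam ^ 2 * gam β) / (w + lam * (1 - lam) * gam β) := funext hZ
    rw [this]
    exact ((measurable_const.mul (measurable_pi_apply 0)).sub
      (measurable_const.mul hgamm)).div (measurable_const.add (measurable_const.mul hgamm))
  have hTm : Measurable (fun β => (gam β, Z β)) := hgamm.prodMk hZm
  have hdm : Measurable (fun β => ENNReal.ofReal (nuDensity !![0, w; w, 0] 0 β)) := by
    have hrw : nuDensity !![0, w; w, 0] 0 = fun β : Fin 2 → ℝ =>
        if 0 < β 0 ∧ 0 < β 1 ∧ w ^ 2 < 4 * β 0 * β 1 then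
          (2 / Real.pi) * Real.exp (-(β 0 + β 1 - w)) *
            (Real.sqrt (4 * β 0 * β 1 - w ^ 2))⁻¹
        else 0 := funext (nuDensity_eq w hw)
    apply ENNReal.measurable_ofReal.comp
    rw [hrw]
    refine Measurable.ite ?_ ?_ measurable_const
    · exact hEm
    · exact (measurable_const.mul (Real.measurable_exp.comp
        ((((measurable_pi_apply 0).add (measurable_pi_apply 1)).sub
          measurable_const).neg))).mul
        ((Real.continuous_sqrt.measurable.comp
          (((measurable_const.mul (measurable_pi_apply 0)).mul
            (measurable_pi_apply 1)).sub measurable_const)).inv)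
  have hJm : Measurable (fun c => ENNReal.ofReal |(jclm w lam c).det|) := by
    have hdet : (fun c : Fin 2 → ℝ => (jclm w lam c).det) = fun c : Fin 2 → ℝ =>
        (lam * (1 - lam) * c 1 + lam ^ 2) / 2 *
          (-((w + lam * (1 - lam) * c 0) / (2 * (c 1) ^ 2))) -
        (w + lam * (1 - lam) * c 0) / 2 *
          ((lam * (1 - lam) / c 1 + (1 - lam) ^ 2) / 2) := by
      funext c
      rw [jclm_det, det_fin_two]
      simp [jmat]
    apply ENNReal.measurable_ofReal.comp
    have : (fun c : Fin 2 → ℝ => |(jclm w lam c).det|) =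
        fun c : Fin 2 → ℝ => |(lam * (1 - lam) * c 1 + lam ^ 2) / 2 *
          (-((w + lam * (1 - lam) * c 0) / (2 * (c 1) ^ 2))) -
        (w + lam * (1 - lam) * c 0) / 2 *
          ((lam * (1 - lam) / c 1 + (1 - lam) ^ 2) / 2)| := by
      funext c; rw [congrFun hdet c]
    rw [this]
    apply Measurable.abs
    apply Measurable.sub
    · exact (((measurable_const.mul (measurable_pi_apply 1)).add
        measurable_const).div_const 2).mul
        (((measurable_const.add (measurable_const.mul (measurable_pi_apply 0))).div
          (measurable_const.mul ((measurable_pi_apply 1).pow_const 2))).neg)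
    · exact ((measurable_const.add (measurable_const.mul
        (measurable_pi_apply 0))).div_const 2).mul
        (((measurable_const.div (measurable_pi_apply 1)).add
          measurable_const).div_const 2)
  -- Step A: the measure is supported on Ereg
  have hstepA : nuMeasure !![0, w; w, 0] 0 = (volume.restrict Ereg).withDensity
      (fun β => ENNReal.ofReal (nuDensity !![0, w; w, 0] 0 β)) := by
    rw [nuMeasure, ← withDensity_indicator hEm]
    congr 1
    funext β
    by_cases hb : β ∈ Ereg
    · rw [Set.indicator_of_mem hb]
    · have hb' : ¬(0 < β 0 ∧ 0 < β 1 ∧ w ^ 2 < 4 * β 0 * β 1) :=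
        fun hcond => hb hcond
      rw [Set.indicator_of_notMem hb, nuDensity_eq w hw, if_neg hb',
        ENNReal.ofReal_zero]
  -- injectivity of phi on sreg
  have hinj : Set.InjOn (phi w lam) sreg := by
    intro c hc c' hc' hphi
    have h1 := gam_phi hw hl0 hl1 hw0 c hc.1 hc.2
    have h1' := gam_phi hw hl0 hl1 hw0 c' hc'.1 hc'.2
    have h2 := Z_phi hw hl0 hl1 hw0 c hc.1 hc.2
    have h2' := Z_phi hw hl0 hl1 hw0 c' hc'.1 hc'.2
    rw [hphi] at h1 h2
    have e0 : c 0 = c' 0 := by rw [← h1, ← h1']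
    have e1 : c 1 = c' 1 := by rw [← h2, ← h2', e0]
    funext i
    fin_cases i
    · exact e0
    · exact e1
  -- image of sreg under phi
  have himg : phi w lam '' sreg = Ereg := by
    apply Set.Subset.antisymm
    · rintro β ⟨c, hc, rfl⟩
      exact phi_mem hw hl0 hl1 hw0 c hc.1 hc.2
    · intro β hβ
      obtain ⟨c, hcs, hceq, -, -⟩ :=
        exists_preimage hw hl0 hl1 hw0 β hβ.1 hβ.2.1 hβ.2.2
      exact ⟨c, hcs, hceq⟩
  -- Step B: change of variables
  have hstepB : Measure.map (phi w lam) ((volume.restrict sreg).withDensity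
      (fun c => ENNReal.ofReal |(jclm w lam c).det|)) = volume.restrict Ereg := by
    have := map_withDensity_abs_det_fderiv_eq_addHaar (volume : Measure (Fin 2 → ℝ))
      hsm.nullMeasurableSet (fun c hc => (hasFDerivAt_phi w lam c hc.2.ne').hasFDerivWithinAt) hinj
    rwa [himg] at this
  -- the density on sreg
  set ρ : (Fin 2 → ℝ) → ℝ≥0∞ := fun c => ENNReal.ofReal |(jclm w lam c).det| *
    ENNReal.ofReal (nuDensity !![0, w; w, 0] 0 (phi w lam c)) with hρ_def
  have hρm : Measurable ρ := hJm.mul (hdm.comp hphim)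
  set μ0 : Measure (Fin 2 → ℝ) := (volume.restrict sreg).withDensity ρ with hμ0_def
  have hnu : nuMeasure !![0, w; w, 0] 0 = Measure.map (phi w lam) μ0 := by
    have key := map_withDensity_aux2 (volume.restrict sreg) hphim hJm hdm
    rw [hstepB, ← hstepA] at key
    exact key.symm
  -- support of μ0
  have hsupp : μ0 sregᶜ = 0 := by
    refine withDensity_absolutelyContinuous (volume.restrict sreg) ρ ?_
    rw [Measure.restrict_apply hsm.compl, Set.compl_inter_self]
    exact measure_empty
  have hsae : sreg ∈ ae μ0 := mem_ae_iff.2 hsupp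
  -- T ∘ phi = coordinates on sreg
  have haeeq : ((fun β => (gam β, Z β)) ∘ phi w lam) =ᵐ[μ0]
      (fun c : Fin 2 → ℝ => (c 0, c 1)) := by
    filter_upwards [hsae] with c hc
    have hg0 : gam (phi w lam c) = c 0 := by
      rw [hgam]
      exact gam_phi hw hl0 hl1 hw0 c hc.1 hc.2
    have hz0 : Z (phi w lam c) = c 1 := by
      rw [hZ, hg0]
      exact Z_phi hw hl0 hl1 hw0 c hc.1 hc.2
    show (gam (phi w lam c), Z (phi w lam c)) = (c 0, c 1)
    rw [hg0, hz0]
  -- the measurable equivalence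
  set e : (Fin 2 → ℝ) ≃ᵐ ℝ × ℝ := MeasurableEquiv.finTwoArrow with he_def
  have hecoe : (fun c : Fin 2 → ℝ => (c 0, c 1)) = ⇑e := by
    funext c
    simp [he_def, MeasurableEquiv.finTwoArrow]
  have hmapLHS : (nuMeasure !![0, w; w, 0] 0).map (fun β => (gam β, Z β)) =
      Measure.map (⇑e) μ0 := by
    rw [hnu, Measure.map_map hTm hphim, Measure.map_congr haeeq, hecoe]
  -- push μ0 through e
  have hρ'm : Measurable (fun p : ℝ × ℝ => ρ (e.symm p)) :=
    hρm.comp e.symm.measurable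
  have hcompe : (fun c : Fin 2 → ℝ => ρ (e.symm (e c))) = ρ := by
    funext c
    rw [MeasurableEquiv.symm_apply_apply]
  have hrestr : Measure.map (⇑e) (volume.restrict sreg) = volume.restrict treg := by
    have hvol : Measure.map (⇑e) volume = volume :=
      (volume_preserving_finTwoArrow ℝ).map_eq
    have hpre : ⇑e ⁻¹' treg = sreg := by
      ext c
      simp [ht_def, he_def, MeasurableEquiv.finTwoArrow, hs_def]
    rw [← hvol, Measure.restrict_map e.measurable htm, hpre]
  have hmape : Measure.map (⇑e) μ0 =
      (volume.restrict treg).withDensity (fun p => ρ (e.symm p)) := by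
    have key2 := map_withDensity_aux (volume.restrict sreg) e.measurable hρ'm
    simp only [MeasurableEquiv.symm_apply_apply] at key2
    rw [hrestr] at key2
    exact key2
  -- rewrite the RHS as a restricted withDensity
  have hG : (fun p : ℝ × ℝ => ENNReal.ofReal
      (if 0 < p.1 ∧ 0 < p.2 then
        (2 / Real.pi) *
          (Real.sqrt (w + lam * (1 - lam) * p.1) / (4 * Real.sqrt p.1)) *
          (1 / p.2) *
          ((1 - lam) * Real.sqrt p.2 + lam / Real.sqrt p.2) *
          Real.exp (-(p.1 / 2) -
            (w + lam * (1 - lam) * p.1) * (p.2 - 1) ^ 2 / (2 * p.2))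
      else 0)) = treg.indicator (fun p : ℝ × ℝ => ENNReal.ofReal
        ((2 / Real.pi) *
          (Real.sqrt (w + lam * (1 - lam) * p.1) / (4 * Real.sqrt p.1)) *
          (1 / p.2) *
          ((1 - lam) * Real.sqrt p.2 + lam / Real.sqrt p.2) *
          Real.exp (-(p.1 / 2) -
            (w + lam * (1 - lam) * p.1) * (p.2 - 1) ^ 2 / (2 * p.2)))) := by
    funext p
    by_cases hp : p ∈ treg
    · have hp' : 0 < p.1 ∧ 0 < p.2 := by
        simpa [ht_def, Set.mem_prod] using hp
      rw [Set.indicator_of_mem hp, if_pos hp']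
    · have hp' : ¬ (0 < p.1 ∧ 0 < p.2) := by
        simpa [ht_def, Set.mem_prod] using hp
      rw [Set.indicator_of_notMem hp, if_neg hp', ENNReal.ofReal_zero]
  rw [hmapLHS, hmape, hG, withDensity_indicator htm]
  -- final: densities agree on treg
  apply withDensity_congr_ae
  filter_upwards [self_mem_ae_restrict htm] with p hp
  have hp' : 0 < p.1 ∧ 0 < p.2 := by
    simpa [ht_def, Set.mem_prod] using hp
  have hc0 : (e.symm p) 0 = p.1 := by
    simp [he_def, MeasurableEquiv.finTwoArrow]
  have hc1 : (e.symm p) 1 = p.2 := by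
    simp [he_def, MeasurableEquiv.finTwoArrow]
  rw [hρ_def]
  show ENNReal.ofReal |(jclm w lam (e.symm p)).det| *
      ENNReal.ofReal (nuDensity !![0, w; w, 0] 0 (phi w lam (e.symm p))) = _
  rw [jclm_det, ← ENNReal.ofReal_mul (abs_nonneg _)]
  rw [density_identity hw hl0 hl1 hw0 (e.symm p) (hc0 ▸ hp'.1) (hc1 ▸ hp'.2)]
  rw [hc0, hc1]
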